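/- In any (θ₁, θ₂, …, θ_k)-representation of K_{n×3} with θ₁ < θ₂ < ⋯ < θ_k, no two distinct parts have the same color, i.e., no two distinct parts have the same multiset of colors on their nonedges. -/

import Mathlib

open Finset

/-- The disjoint union of `n` copies of the complete graph `K_m`,
on vertex set `Fin n × Fin m`. -/
def copiesK (n m : ℕ) : SimpleGraph (Fin n × Fin m) where
  Adj x y := x.1 = y.1 ∧ x ≠ y
  symm := ⟨fun x y h => ⟨h.1.symm, h.2.symm⟩⟩
  loopless := ⟨fun x h => h.2 rfl⟩

/-- The complete `n`-partite graph with `m` vertices in each part,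
on vertex set `Fin n × Fin m`. -/
def completeMulti (n m : ℕ) : SimpleGraph (Fin n × Fin m) where
  Adj x y := x.1 ≠ y.1
  symm := ⟨fun x y h => h.symm⟩
  loopless := ⟨fun x h => h rfl⟩

/-- `r` together with the strictly increasing thresholds `θ₁ < ⋯ < θ_k` is a
`(θ₁, …, θ_k)`-representation of `G`: for distinct `u v`, `uv` is an edge iff the
number of thresholds not exceeding `r u + r v` is odd. -/
def IsRep {V : Type*} {k : ℕ} (G : SimpleGraph V) (θ : Fin k → ℝ) (r : V → ℝ) : Prop :=
  StrictMono θ ∧ ∀ u v : V, u ≠ v →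
    (G.Adj u v ↔ Odd (Finset.univ.filter (fun i => θ i ≤ r u + r v)).card)

/-- `G` is a `k`-threshold graph. -/
def IsKThreshold {V : Type*} (G : SimpleGraph V) (k : ℕ) : Prop :=
  ∃ (θ : Fin k → ℝ) (r : V → ℝ), IsRep G θ r

/-- The threshold number `Θ(G)`: the least `k` for which `G` is a `k`-threshold graph. -/
noncomputable def thresholdNumber {V : Type*} (G : SimpleGraph V) : ℕ :=
  sInf {k | IsKThreshold G k}

/-- The 1-based color of an edge with rank sum `s`: it equals `i` exactly when
`s ∈ [θ_{2i-1}, θ_{2i})` (1-based indexing, with `θ_{k+1} = ∞`), i.e. when the number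
of thresholds not exceeding `s` equals `2i - 1`. -/
noncomputable def edgeColor {k : ℕ} (θ : Fin k → ℝ) (s : ℝ) : ℕ :=
  ((Finset.univ.filter (fun i => θ i ≤ s)).card + 1) / 2

/-- The 1-based color of a nonedge with rank sum `s`: it equals `i` exactly when
`s ∈ [θ_{2i-2}, θ_{2i-1})` (1-based indexing, with `θ₀ = -∞`), i.e. when the number
of thresholds not exceeding `s` equals `2i - 2`. -/
noncomputable def nonedgeColor {k : ℕ} (θ : Fin k → ℝ) (s : ℝ) : ℕ :=
  (Finset.univ.filter (fun i => θ i ≤ s)).card / 2 + 1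

/-- The multiset of colors on the three edges of the `t`-th triangle of `nK₃`. -/
noncomputable def triColors3 {n k : ℕ} (θ : Fin k → ℝ) (r : Fin n × Fin 3 → ℝ) (t : Fin n) :
    Multiset ℕ :=
  {edgeColor θ (r (t, 0) + r (t, 1)), edgeColor θ (r (t, 0) + r (t, 2)),
    edgeColor θ (r (t, 1) + r (t, 2))}

/-- The multiset of colors on the three nonedges of the `t`-th part of `K_{n×3}`. -/
noncomputable def partColors3 {n k : ℕ} (θ : Fin k → ℝ) (r : Fin n × Fin 3 → ℝ) (t : Fin n) :
    Multiset ℕ :=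
  {nonedgeColor θ (r (t, 0) + r (t, 1)), nonedgeColor θ (r (t, 0) + r (t, 2)),
    nonedgeColor θ (r (t, 1) + r (t, 2))}

/-!
Let `f(s)` be the number of thresholds `≤ s`; it is monotone in `s`, even on the rank sums inside a
part and odd on those across two parts. A nonedge color `c` comes from the even count `2(c - 1)`,
so two parts with equal colors, with sorted ranks `x₀ ≤ x₁ ≤ x₂` and `y₀ ≤ y₁ ≤ y₂` (say `y₂ ≤ x₂`),
have `f(xᵢ + xⱼ) = f(yᵢ + yⱼ)`. No cross sum may lie between two sums with the same even count:
`x₂ + y₀ ∈ [y₀ + y₂, x₀ + x₂]` forces `x₀ < y₀`, then `x₀ + y₁ ∈ [x₀ + x₁, y₀ + y₁]` forces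
`y₁ < x₁`, and then `x₁ + y₂ ∈ [y₁ + y₂, x₁ + x₂]` is a contradiction.
-/

theorem Multiset.triple_eq_of_sorted {α : Type*} [LinearOrder α] {a₀ a₁ a₂ b₀ b₁ b₂ : α}
    (ha₀ : a₀ ≤ a₁) (ha₁ : a₁ ≤ a₂) (hb₀ : b₀ ≤ b₁) (hb₁ : b₁ ≤ b₂)
    (h : ({a₀, a₁, a₂} : Multiset α) = {b₀, b₁, b₂}) : a₀ = b₀ ∧ a₁ = b₁ ∧ a₂ = b₂ := by
  have hsorted : ∀ {c₀ c₁ c₂ : α}, c₀ ≤ c₁ → c₁ ≤ c₂ → [c₀, c₁, c₂].SortedLE := fun h₀ h₁ => by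
    simp only [List.sortedLE_iff_pairwise, List.pairwise_cons, List.mem_cons, List.not_mem_nil,
      List.Pairwise.nil]
    grind
  simpa using (Multiset.coe_eq_coe.mp h).eq_of_sortedLE (hsorted ha₀ ha₁) (hsorted hb₀ hb₁)

theorem Monotone.even_of_mem_Icc {α : Type*} [Preorder α] {f : α → ℕ} (hf : Monotone f)
    {a b c : α} (hb : b ∈ Set.Icc a c) (hac : f a = f c) (ha : Even (f a)) : Even (f b) := by
  rwa [le_antisymm ((hf hb.2).trans hac.ge) (hf hb.1)]

def pairSums {M : Type*} [AddCommMagma M] (x : Fin 3 → M) : Multiset M :=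
  {x 0 + x 1, x 0 + x 2, x 1 + x 2}

theorem pairSums_comp_perm {M : Type*} [AddCommMagma M] (x : Fin 3 → M)
    (σ : Equiv.Perm (Fin 3)) : pairSums (x ∘ σ) = pairSums x := by
  have hσ : ∀ τ : Equiv.Perm (Fin 3),
      (τ 0 = 0 ∧ τ 1 = 1 ∧ τ 2 = 2) ∨ (τ 0 = 0 ∧ τ 1 = 2 ∧ τ 2 = 1) ∨
      (τ 0 = 1 ∧ τ 1 = 0 ∧ τ 2 = 2) ∨ (τ 0 = 1 ∧ τ 1 = 2 ∧ τ 2 = 0) ∨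
      (τ 0 = 2 ∧ τ 1 = 0 ∧ τ 2 = 1) ∨ (τ 0 = 2 ∧ τ 1 = 1 ∧ τ 2 = 0) := by
    decide
  rcases hσ σ with ⟨h₀, h₁, h₂⟩ | ⟨h₀, h₁, h₂⟩ | ⟨h₀, h₁, h₂⟩ | ⟨h₀, h₁, h₂⟩ | ⟨h₀, h₁, h₂⟩ |
    ⟨h₀, h₁, h₂⟩ <;>
  simp [pairSums, h₀, h₁, h₂, add_comm (x 1) (x 0), add_comm (x 2) (x 0), add_comm (x 2) (x 1),
    ← Multiset.cons_zero, Multiset.cons_swap]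

section PairSums

variable {f : ℝ → ℕ} {x y : Fin 3 → ℝ}

theorem false_of_pairSums_of_le (hf : Monotone f) (hx : Monotone x) (hy : Monotone y)
    (hyx : y 2 ≤ x 2) (hye : ∀ s ∈ pairSums y, Even (f s)) (hodd : ∀ i j, Odd (f (x i + y j)))
    (h01 : f (x 0 + x 1) = f (y 0 + y 1)) (h02 : f (x 0 + x 2) = f (y 0 + y 2))
    (h12 : f (x 1 + x 2) = f (y 1 + y 2)) : False := by
  have hx01 : x 0 ≤ x 1 := hx (by decide)
  have hx12 : x 1 ≤ x 2 := hx (by decide)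
  have hy01 : y 0 ≤ y 1 := hy (by decide)
  have hy12 : y 1 ≤ y 2 := hy (by decide)
  have between : ∀ i j {a c}, a ≤ x i + y j → x i + y j ≤ c → f a = f c → Even (f a) → False :=
    fun i j _ _ ha hc hac he =>
      Nat.not_even_iff_odd.2 (hodd i j) (hf.even_of_mem_Icc ⟨ha, hc⟩ hac he)
  have hx0y0 : x 0 < y 0 := by
    by_contra! h
    exact between 2 0 (by linarith) (by linarith) h02.symm (hye _ (by simp [pairSums]))
  have hy1x1 : y 1 < x 1 := by
    by_contra! h
    exact between 0 1 (by linarith) (by linarith) h01 (h01 ▸ hye _ (by simp [pairSums]))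
  exact between 1 2 (by linarith) (by linarith) h12.symm (hye _ (by simp [pairSums]))

theorem map_pairSums_ne (hf : Monotone f) (hx : Monotone x) (hy : Monotone y)
    (hxe : ∀ s ∈ pairSums x, Even (f s)) (hye : ∀ s ∈ pairSums y, Even (f s))
    (hodd : ∀ i j, Odd (f (x i + y j))) : (pairSums x).map f ≠ (pairSums y).map f := by
  intro h
  have hsorted : ∀ z : Fin 3 → ℝ, Monotone z →
      f (z 0 + z 1) ≤ f (z 0 + z 2) ∧ f (z 0 + z 2) ≤ f (z 1 + z 2) := fun z hz =>
    ⟨hf (by linarith [hz (show (1 : Fin 3) ≤ 2 by decide)]),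
      hf (by linarith [hz (show (0 : Fin 3) ≤ 1 by decide)])⟩
  obtain ⟨h01, h02, h12⟩ := Multiset.triple_eq_of_sorted (hsorted x hx).1 (hsorted x hx).2
    (hsorted y hy).1 (hsorted y hy).2 (by simpa [pairSums] using h)
  rcases le_total (y 2) (x 2) with hyx | hxy
  · exact false_of_pairSums_of_le hf hx hy hyx hye hodd h01 h02 h12
  · exact false_of_pairSums_of_le hf hy hx hxy hxe (fun i j => add_comm (x j) (y i) ▸ hodd j i)
      h01.symm h02.symm h12.symm

end PairSums

noncomputable def thresholdCount {k : ℕ} (θ : Fin k → ℝ) (s : ℝ) : ℕ :=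
  #{i | θ i ≤ s}

section Threshold

variable {k : ℕ} {θ : Fin k → ℝ}

theorem thresholdCount_mono (θ : Fin k → ℝ) : Monotone (thresholdCount θ) :=
  fun _ _ hst => card_le_card (monotone_filter_right _ fun _ _ hi => hi.trans hst)

theorem map_thresholdCount_eq_of_map_nonedgeColor_eq {S T : Multiset ℝ}
    (hS : ∀ s ∈ S, Even (thresholdCount θ s)) (hT : ∀ s ∈ T, Even (thresholdCount θ s))
    (h : S.map (nonedgeColor θ) = T.map (nonedgeColor θ)) :
    S.map (thresholdCount θ) = T.map (thresholdCount θ) := by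
  have hinv : ∀ U : Multiset ℝ, (∀ s ∈ U, Even (thresholdCount θ s)) →
      U.map (thresholdCount θ) = (U.map (nonedgeColor θ)).map fun c => 2 * (c - 1) := by
    intro U hU
    rw [Multiset.map_map]
    refine Multiset.map_congr rfl fun s hs => ?_
    obtain ⟨m, hm⟩ := hU s hs
    simp only [Function.comp_apply, nonedgeColor]
    unfold thresholdCount at hm ⊢
    omega
  rw [hinv S hS, hinv T hT, h]

variable {n : ℕ} {r : Fin n × Fin 3 → ℝ}

theorem partColors3_eq_map_pairSums (t : Fin n) :
    partColors3 θ r t = (pairSums fun i => r (t, i)).map (nonedgeColor θ) := by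
  simp [partColors3, pairSums]

theorem IsRep.odd_thresholdCount_of_ne (hrep : IsRep (completeMulti n 3) θ r) {s t : Fin n}
    (hst : s ≠ t) (a b : Fin 3) : Odd (thresholdCount θ (r (s, a) + r (t, b))) :=
  (hrep.2 _ _ fun h => hst (congrArg Prod.fst h)).1 hst

theorem IsRep.even_thresholdCount_pairSums (hrep : IsRep (completeMulti n 3) θ r) (t : Fin n) :
    ∀ s ∈ pairSums (fun i => r (t, i)), Even (thresholdCount θ s) := by
  have heven : ∀ a b : Fin 3, a ≠ b → Even (thresholdCount θ (r (t, a) + r (t, b))) :=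
    fun a b hab => Nat.not_odd_iff_even.1 fun hodd =>
      (hrep.2 _ _ fun h => hab (congrArg Prod.snd h)).2 hodd rfl
  simp only [pairSums, Multiset.insert_eq_cons, Multiset.mem_cons, Multiset.mem_singleton]
  rintro s (rfl | rfl | rfl)
  exacts [heven 0 1 (by decide), heven 0 2 (by decide), heven 1 2 (by decide)]

end Threshold

/-- In any `(θ₁, …, θ_k)`-representation of `K_{n×3}`, no two distinct parts have
the same multiset of colors on their nonedges. -/
theorem stmt6 (n k : ℕ) (θ : Fin k → ℝ) (r : Fin n × Fin 3 → ℝ)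
    (hrep : IsRep (completeMulti n 3) θ r) :
    ∀ t₁ t₂ : Fin n, t₁ ≠ t₂ → partColors3 θ r t₁ ≠ partColors3 θ r t₂ := by
  intro t₁ t₂ hne hcolor
  set part : Fin n → Fin 3 → ℝ := fun t i => r (t, i)
  have heven (t : Fin n) := hrep.even_thresholdCount_pairSums t
  refine map_pairSums_ne (thresholdCount_mono θ) (Tuple.monotone_sort (part t₁))
    (Tuple.monotone_sort (part t₂)) (by rw [pairSums_comp_perm]; exact heven t₁)
    (by rw [pairSums_comp_perm]; exact heven t₂)
    (fun _ _ => hrep.odd_thresholdCount_of_ne hne _ _) ?_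
  rw [pairSums_comp_perm, pairSums_comp_perm]
  refine map_thresholdCount_eq_of_map_nonedgeColor_eq (heven t₁) (heven t₂) ?_
  rwa [partColors3_eq_map_pairSums, partColors3_eq_map_pairSums] at hcolor
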